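/- arXiv:2212.04470 — 2 statements merged into one kernel-verified Lean document; each statement's English description precedes it below -/
import Mathlib

section
/- Let M ≥ 1 be an integer. Let C_r ∈ ℂ^{M×M} be the matrix with entries [C_r]_{m,n} = 1 − |m−n|/M + i·(m−n)/M for 1 ≤ m, n ≤ M, and let a ∈ ℂ^M be the vector with entries a_m = exp(i·π(m−1)/(2M)). Then aᴴ C_r⁻¹ a = 2M² sin²(π/(4M)); consequently, for every σ > 0, σ²(1 − (2/π) aᴴ C_r⁻¹ a) = σ²(1 − (4M²/π) sin²(π/(4M))). -/
/-!
`C_r` is the Toeplitz matrix of the kernel `k(t) = 1 - |t|/M + i t/M`, which is piecewise linear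
with a single kink at `0` and satisfies `k(t) = i k(t - M)` on `[0, M]`. Hence the discrete second
difference with the `i`-twisted periodic boundary condition `x_M = i x_0` sends the columns of `C_r`
to `2/M` times the unit vectors: `C_r⁻¹ = (M/2)(2 - P - P⁻¹)` with `P` the cyclic shift twisted
by `i`. The pilot vector is `a_m = e^m` with `e = exp(iπ/(2M))`, and `e^M = i`, so `a` is an
eigenvector of `P` with eigenvalue `e`, and of `C_r⁻¹` with eigenvalue
`(M/2)(2 - e - e⁻¹) = 2M sin²(π/(4M))`. Since `|a_m| = 1`, `aᴴ C_r⁻¹ a` is `M` times this.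
-/

open Matrix Real

section TwistedShift

variable {R : Type*} [Field R] {M : ℕ}

/-- The cyclic shift `x ↦ (x₁, …, x_{M-1}, c • x₀)`. -/
def twistedShift (M : ℕ) (c : R) : Matrix (Fin M) (Fin M) R :=
  Matrix.of fun m n =>
    if (n : ℕ) = m + 1 then 1 else if (m : ℕ) + 1 = M ∧ (n : ℕ) = 0 then c else 0

lemma twistedShift_mulVec (c : R) {g : ℤ → R} (hg : g M = c * g 0) (m : Fin M) :
    (twistedShift M c *ᵥ fun n => g n) m = g (m + 1) := by
  simp only [mulVec, dotProduct, twistedShift, of_apply, ite_mul, one_mul, zero_mul]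
  by_cases hm : (m : ℕ) + 1 < M
  · rw [Fintype.sum_eq_single ⟨m + 1, hm⟩]
    · simp
    · intro n hn
      have : (n : ℕ) ≠ m + 1 := fun h => hn (Fin.ext h)
      simp [this]
      omega
  · have hmM : (m : ℕ) + 1 = M := by omega
    rw [Fintype.sum_eq_single ⟨0, by omega⟩]
    · have h1 : ((m : ℕ) : ℤ) + 1 = M := by omega
      rw [if_neg (by simp), if_pos ⟨hmM, rfl⟩, h1, hg]
      rfl
    · intro n hn
      have : (n : ℕ) ≠ 0 := fun h => hn (Fin.ext h)
      simp [this]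
      omega

lemma twistedShift_inv_transpose_mulVec {c : R} (hc : c ≠ 0) {g : ℤ → R}
    (hg : g (M - 1) = c * g (-1)) (m : Fin M) :
    ((twistedShift M c⁻¹)ᵀ *ᵥ fun n => g n) m = g (m - 1) := by
  simp only [mulVec, dotProduct, transpose_apply, twistedShift, of_apply, ite_mul, one_mul,
    zero_mul]
  by_cases hm : (m : ℕ) = 0
  · rw [Fintype.sum_eq_single ⟨M - 1, by omega⟩]
    · have h1 : ((M - 1 : ℕ) : ℤ) = M - 1 := by omega
      rw [if_neg (by simp; omega), if_pos ⟨by simp; omega, hm⟩, h1, hg,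
        inv_mul_cancel_left₀ hc, hm]
      rfl
    · intro n hn
      have : (n : ℕ) + 1 ≠ M := fun h => hn (Fin.ext (by simp; omega))
      simp [this]
      omega
  · rw [Fintype.sum_eq_single ⟨m - 1, by omega⟩]
    · have h1 : ((m - 1 : ℕ) : ℤ) = m - 1 := by omega
      simp [hm, h1]
      omega
    · intro n hn
      have : (m : ℕ) ≠ n + 1 := fun h => hn (Fin.ext (by simp; omega))
      simp [this, hm]

/-- `2 - P - P⁻¹` for `P = twistedShift M c`: when `c ≠ 0`, `P⁻¹ = (twistedShift M c⁻¹)ᵀ`. -/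
def twistedLaplacian (M : ℕ) (c : R) : Matrix (Fin M) (Fin M) R :=
  2 - twistedShift M c - (twistedShift M c⁻¹)ᵀ

lemma twistedLaplacian_mulVec {c : R} (hc : c ≠ 0) {g : ℤ → R} (hg : g M = c * g 0)
    (hg' : g (M - 1) = c * g (-1)) (m : Fin M) :
    (twistedLaplacian M c *ᵥ fun n => g n) m = 2 * g m - g (m + 1) - g (m - 1) := by
  simp [twistedLaplacian, sub_mulVec, ofNat_mulVec, twistedShift_mulVec c hg,
    twistedShift_inv_transpose_mulVec hc hg']

lemma twistedLaplacian_mulVec_pow {c e : R} (he : e ≠ 0) (heM : e ^ M = c) :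
    twistedLaplacian M c *ᵥ (fun n : Fin M => e ^ (n : ℕ)) =
      (2 - e - e⁻¹) • fun n : Fin M => e ^ (n : ℕ) := by
  ext m
  have hc : c ≠ 0 := heM ▸ pow_ne_zero M he
  have key := twistedLaplacian_mulVec hc (g := fun j => e ^ j) (by simp [← heM])
    (by rw [zpow_sub₀ he, ← heM]; simp [div_eq_mul_inv]) m
  simp only [zpow_natCast] at key
  rw [key, zpow_add₀ he, zpow_sub₀ he, Pi.smul_apply, smul_eq_mul]
  simp only [zpow_natCast, zpow_one]
  field_simp

end TwistedShift

open Complex in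
noncomputable def arcsineKernel (M : ℕ) (t : ℝ) : ℂ :=
  ((1 - |t| / M : ℝ) : ℂ) + I * ((t / M : ℝ) : ℂ)

lemma arcsineKernel_eq_I_mul {M : ℕ} (hM : 0 < M) {t : ℝ} (h0 : 0 ≤ t) (htM : t ≤ M) :
    arcsineKernel M t = Complex.I * arcsineKernel M (t - M) := by
  have hM0 : (M : ℝ) ≠ 0 := by positivity
  rw [arcsineKernel, arcsineKernel, abs_of_nonneg h0, abs_of_nonpos (by linarith)]
  apply Complex.ext <;> simp <;> field_simp <;> ring

lemma abs_add_one_add_abs_sub_one (d : ℤ) :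
    |(d : ℝ) + 1| + |(d : ℝ) - 1| = 2 * |(d : ℝ)| + if d = 0 then 2 else 0 := by
  rcases lt_trichotomy d 0 with hd | rfl | hd
  · have hd' : (d : ℝ) ≤ -1 := by exact_mod_cast Int.le_sub_one_of_lt hd
    rw [abs_of_nonpos (by linarith), abs_of_neg (by linarith), abs_of_neg (by linarith),
      if_neg hd.ne]
    ring
  · norm_num
  · have hd' : (1 : ℝ) ≤ d := by exact_mod_cast hd
    rw [abs_of_pos (by linarith), abs_of_nonneg (by linarith), abs_of_pos (by linarith),
      if_neg hd.ne']
    ring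

lemma arcsineKernel_secondDiff (M : ℕ) (d : ℤ) :
    2 * arcsineKernel M d - arcsineKernel M (d + 1) - arcsineKernel M (d - 1) =
      if d = 0 then (2 / M : ℂ) else 0 := by
  have h : 2 * arcsineKernel M d - arcsineKernel M (d + 1) - arcsineKernel M (d - 1) =
      (((|(d : ℝ) + 1| + |(d : ℝ) - 1| - 2 * |(d : ℝ)|) / M : ℝ) : ℂ) := by
    simp only [arcsineKernel]
    push_cast
    ring
  rw [h, abs_add_one_add_abs_sub_one]
  split_ifs <;> simp

noncomputable def arcsineCov (M : ℕ) : Matrix (Fin M) (Fin M) ℂ :=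
  Matrix.of fun m n => arcsineKernel M ((m : ℕ) - (n : ℕ))

lemma twistedLaplacian_mul_arcsineCov {M : ℕ} (hM : 0 < M) :
    ((M : ℂ) / 2) • twistedLaplacian M Complex.I * arcsineCov M = 1 := by
  ext m k
  let g : ℤ → ℂ := fun j => arcsineKernel M (j - (k : ℕ))
  have hk : (k : ℝ) + 1 ≤ M := by exact_mod_cast k.isLt
  have hg : g M = Complex.I * g 0 := by
    simpa [g] using arcsineKernel_eq_I_mul hM (t := M - k) (by linarith) (by simp)
  have hg' : g (M - 1) = Complex.I * g (-1) := by
    have := arcsineKernel_eq_I_mul hM (t := M - 1 - k) (by linarith) (by linarith)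
    simp only [g]
    push_cast
    convert this using 3
    ring
  have hcol : (fun n : Fin M => arcsineCov M n k) = fun n : Fin M => g n := by
    ext n; simp [arcsineCov, g]
  rw [Matrix.smul_mul, Matrix.smul_apply, mul_apply, ← dotProduct, ← mulVec, hcol,
    twistedLaplacian_mulVec Complex.I_ne_zero hg hg']
  have := arcsineKernel_secondDiff M ((m : ℕ) - (k : ℕ))
  simp only [g]
  push_cast at this ⊢
  rw [add_sub_right_comm, sub_right_comm _ (1 : ℝ), this, one_apply, smul_eq_mul]
  have hM0 : (M : ℂ) ≠ 0 := by exact_mod_cast hM.ne'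
  split_ifs with h1 h2 h2
  · field_simp
  · exact absurd (Fin.ext (by exact_mod_cast sub_eq_zero.mp h1)) h2
  · exact absurd (by rw [h2, sub_self]) h1
  · simp

lemma inv_arcsineCov {M : ℕ} (hM : 0 < M) :
    (arcsineCov M)⁻¹ = ((M : ℂ) / 2) • twistedLaplacian M Complex.I :=
  inv_eq_left_inv (twistedLaplacian_mul_arcsineCov hM)

lemma two_sub_exp_mul_I_sub_inv (θ : ℝ) :
    2 - Complex.exp (θ * Complex.I) - (Complex.exp (θ * Complex.I))⁻¹ =
      ((4 * Real.sin (θ / 2) ^ 2 : ℝ) : ℂ) := by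
  have hcos := Complex.cos_two_mul_eq_one_sub ((θ / 2 : ℝ) : ℂ)
  rw [← Complex.exp_neg, ← neg_mul, sub_sub, ← Complex.two_cos]
  push_cast at hcos ⊢
  rw [mul_div_cancel₀ _ two_ne_zero] at hcos
  rw [hcos]
  ring

lemma star_dotProduct_self_of_norm_eq_one {ι : Type*} [Fintype ι] {v : ι → ℂ}
    (hv : ∀ i, ‖v i‖ = 1) : star v ⬝ᵥ v = Fintype.card ι := by
  simp [dotProduct, Complex.conj_mul', hv]

/-- **Theorem 4.** For the optimal pilot vector `a_m = exp(iπ(m−1)/(2M))`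
(`0`-based: `a m = exp(iπm/(2M))`) and the arcsine-law covariance matrix `C_r`,
`aᴴ C_r⁻¹ a = 2M² sin²(π/(4M))`; consequently the Bussgang MSE
`σ²(1 − (2/π) aᴴ C_r⁻¹ a)` equals the CME MSE `σ²(1 − (4M²/π) sin²(π/(4M)))`. -/
theorem stmt4 (M : ℕ) (hM : 1 ≤ M)
    (Cr : Matrix (Fin M) (Fin M) ℂ)
    (hCr : ∀ m n, Cr m n =
      ((1 - |((m : ℕ) : ℝ) - ((n : ℕ) : ℝ)| / M : ℝ) : ℂ) +
        Complex.I * (((((m : ℕ) : ℝ) - ((n : ℕ) : ℝ)) / M : ℝ) : ℂ))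
    (a : Fin M → ℂ)
    (ha : ∀ m, a m = Complex.exp (Complex.I * ((π * ((m : ℕ) : ℝ) / (2 * M) : ℝ) : ℂ))) :
    star a ⬝ᵥ (Cr⁻¹ *ᵥ a) = ((2 * (M : ℝ) ^ 2 * Real.sin (π / (4 * M)) ^ 2 : ℝ) : ℂ) ∧
    ∀ σ : ℝ, 0 < σ →
      ((σ ^ 2 : ℝ) : ℂ) * (1 - (2 / (π : ℂ)) * (star a ⬝ᵥ (Cr⁻¹ *ᵥ a))) =
        ((σ ^ 2 * (1 - (4 * (M : ℝ) ^ 2 / π) * Real.sin (π / (4 * M)) ^ 2) : ℝ) : ℂ) := by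
  set θ : ℝ := π / (2 * M)
  set e := Complex.exp (θ * Complex.I)
  have hCr' : Cr = arcsineCov M := Matrix.ext hCr
  have ha' : a = fun n : Fin M => e ^ (n : ℕ) := by
    funext n
    rw [ha, ← Complex.exp_nat_mul]
    congr 1
    push_cast [θ]
    ring
  have heM : e ^ M = Complex.I := by
    rw [← Complex.exp_nat_mul]
    convert Complex.exp_pi_div_two_mul_I using 2
    have hM0 : (M : ℂ) ≠ 0 := by exact_mod_cast (show M ≠ 0 by omega)
    push_cast [θ]
    field_simp
  have hnorm : ∀ n : Fin M, ‖e ^ (n : ℕ)‖ = 1 := fun _ => by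
    rw [norm_pow, Complex.norm_exp_ofReal_mul_I, one_pow]
  have hquad :
      star a ⬝ᵥ (Cr⁻¹ *ᵥ a) = ((2 * (M : ℝ) ^ 2 * Real.sin (π / (4 * M)) ^ 2 : ℝ) : ℂ) := by
    rw [hCr', inv_arcsineCov hM, smul_mulVec, ha',
      twistedLaplacian_mulVec_pow (Complex.exp_ne_zero _) heM, smul_smul, dotProduct_smul,
      star_dotProduct_self_of_norm_eq_one hnorm, two_sub_exp_mul_I_sub_inv]
    have hhalf : θ / 2 = π / (4 * M) := by ring
    rw [hhalf, Fintype.card_fin, smul_eq_mul]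
    push_cast
    ring
  refine ⟨hquad, fun σ _ => ?_⟩
  rw [hquad]
  push_cast
  ring
end

section
/- Let σ > 0 and η > 0, let X and W be independent real random variables with X ~ N(0, σ²/2) and W ~ N(0, η²/2), and set c = σ² / (√π √(σ² + η²)). Then the conditional expectation of X given the sigma-algebra generated by sign(X + W) satisfies E[X | sign(X + W)] = c · sign(X + W) almost surely. -/
/-!
Off the null set `{X + W = 0}`, `sign (X + W) = ±1`, so it suffices to show
`E[X; X + W > 0] = c · P(X + W > 0)` and `E[X; X + W < 0] = -c · P(X + W < 0)`; the second is
the first for the pair `(-X, -W)`, which has the same law. The sum `X + W` is a centered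
Gaussian of variance `a + b` (`a = σ²/2`, `b = η²/2`), hence `P(X + W > 0) = 1/2`. Since
`x φ_a(x) = -a φ_a'(x)`, `∫_{x > t} x dN(0, a) = a φ_a(t)`, and Fubini gives
`E[X; X + W > 0] = a E[φ_a(W)] = a ∫ φ_a φ_b = a φ_{a+b}(0) = c / 2`.
-/

open MeasureTheory ProbabilityTheory Real Filter Set
open scoped NNReal Topology

lemma Real.measurable_sign : Measurable Real.sign :=
  Measurable.ite measurableSet_Iio measurable_const <|
    Measurable.ite measurableSet_Ioi measurable_const measurable_const

lemma indicator_preimage_sign_apply {Ω : Type*} {f : Ω → ℝ} (B : Set ℝ) (h : Ω → ℝ) (ω : Ω) :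
    ((fun ω => sign (f ω)) ⁻¹' B).indicator h ω
      = B.indicator 1 1 * {ω | 0 < f ω}.indicator h ω
        + B.indicator 1 (-1) * {ω | f ω < 0}.indicator h ω
        + B.indicator 1 0 * {ω | f ω = 0}.indicator h ω := by
  classical
  rw [indicator_apply, mem_preimage]
  rcases lt_trichotomy (f ω) 0 with hf | hf | hf
  · simp [hf, hf.ne, hf.not_gt, sign_of_neg hf, indicator_apply]
  · simp [hf, indicator_apply]
  · simp [hf, hf.ne', hf.not_gt, sign_of_pos hf, indicator_apply]

section SignConditioning

variable {Ω : Type*} [MeasurableSpace Ω] {μ : Measure Ω} {f h : Ω → ℝ}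

lemma setIntegral_preimage_sign (hf : Measurable f) (hh : Integrable h μ) {B : Set ℝ}
    (hB : MeasurableSet B) :
    ∫ ω in (fun ω => sign (f ω)) ⁻¹' B, h ω ∂μ
      = B.indicator 1 1 * ∫ ω in {ω | 0 < f ω}, h ω ∂μ
        + B.indicator 1 (-1) * ∫ ω in {ω | f ω < 0}, h ω ∂μ
        + B.indicator 1 0 * ∫ ω in {ω | f ω = 0}, h ω ∂μ := by
  have hpos : MeasurableSet {ω | 0 < f ω} := measurableSet_lt measurable_const hf
  have hneg : MeasurableSet {ω | f ω < 0} := measurableSet_lt hf measurable_const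
  have hzero : MeasurableSet {ω | f ω = 0} := measurableSet_eq_fun hf measurable_const
  have hs : MeasurableSet ((fun ω => sign (f ω)) ⁻¹' B) := Real.measurable_sign.comp hf hB
  rw [← integral_indicator hs]
  simp_rw [indicator_preimage_sign_apply, ← integral_indicator hpos, ← integral_indicator hneg,
    ← integral_indicator hzero, ← integral_const_mul]
  have hint (s : Set Ω) (hs : MeasurableSet s) (c : ℝ) :
      Integrable (fun ω => c * s.indicator h ω) μ := (hh.indicator hs).const_mul c
  rw [integral_add ?_ (hint _ hzero _), integral_add (hint _ hpos _) (hint _ hneg _)]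
  exact (hint _ hpos _).add (hint _ hneg _)

lemma condExp_comap_sign_ae_eq [IsFiniteMeasure μ] (hf : Measurable f) (hh : Integrable h μ)
    (c : ℝ) (hpos : ∫ ω in {ω | 0 < f ω}, h ω ∂μ = c * μ.real {ω | 0 < f ω})
    (hneg : ∫ ω in {ω | f ω < 0}, h ω ∂μ = -(c * μ.real {ω | f ω < 0}))
    (hzero : ∫ ω in {ω | f ω = 0}, h ω ∂μ = 0) :
    μ[h | MeasurableSpace.comap (fun ω => sign (f ω)) inferInstance]
      =ᵐ[μ] fun ω => c * sign (f ω) := by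
  have hsf : Measurable fun ω => sign (f ω) := Real.measurable_sign.comp hf
  have hm := hsf.comap_le
  have hg : Measurable[MeasurableSpace.comap (fun ω => sign (f ω)) inferInstance]
      fun ω => c * sign (f ω) := (comap_measurable _).const_mul c
  have hg_int : Integrable (fun ω => c * sign (f ω)) μ := by
    refine .of_bound (hg.mono hm le_rfl).aestronglyMeasurable |c| (ae_of_all _ fun ω => ?_)
    rcases sign_apply_eq (f ω) with h | h | h <;> simp [h]
  have hg_pos : ∫ ω in {ω | 0 < f ω}, c * sign (f ω) ∂μ = c * μ.real {ω | 0 < f ω} := by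
    rw [setIntegral_congr_fun (measurableSet_lt measurable_const hf)
      (fun ω hω => by rw [sign_of_pos hω, mul_one]), setIntegral_const, smul_eq_mul, mul_comm]
  have hg_neg : ∫ ω in {ω | f ω < 0}, c * sign (f ω) ∂μ = -(c * μ.real {ω | f ω < 0}) := by
    rw [setIntegral_congr_fun (measurableSet_lt hf measurable_const)
      (fun ω hω => by rw [sign_of_neg hω, mul_neg_one]), setIntegral_const, smul_eq_mul, mul_neg,
      mul_comm]
  have hg_zero : ∫ ω in {ω | f ω = 0}, c * sign (f ω) ∂μ = 0 := by
    rw [setIntegral_congr_fun (measurableSet_eq_fun hf measurable_const)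
      (fun ω hω => by rw [show f ω = 0 from hω, Real.sign_zero, mul_zero]), integral_zero]
  refine (ae_eq_condExp_of_forall_setIntegral_eq hm hh (fun _ _ _ => hg_int.integrableOn) ?_
    hg.stronglyMeasurable.aestronglyMeasurable).symm
  rintro _ ⟨B, hB, rfl⟩ -
  rw [setIntegral_preimage_sign hf hg_int hB, setIntegral_preimage_sign hf hh hB, hpos, hneg,
    hzero, hg_pos, hg_neg, hg_zero]

end SignConditioning

namespace ProbabilityTheory

variable {v : ℝ≥0}

lemma hasDerivAt_gaussianPDFReal (μ x : ℝ) :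
    HasDerivAt (gaussianPDFReal μ v) (-((x - μ) / v) * gaussianPDFReal μ v x) x := by
  have h : HasDerivAt (fun y : ℝ => -(y - μ) ^ 2 / (2 * v)) (-((x - μ) / v)) x := by
    refine (((hasDerivAt_id x).sub_const μ).pow 2).neg.div_const (2 * (v : ℝ)) |>.congr_deriv ?_
    rcases eq_or_ne (v : ℝ) 0 with hv | hv
    · simp [hv]
    · field_simp; simp
  refine (h.exp.const_mul (√(2 * π * v))⁻¹).congr_deriv ?_
  simp only [gaussianPDFReal_def]
  ring

lemma tendsto_gaussianPDFReal_atTop (μ : ℝ) (hv : v ≠ 0) :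
    Tendsto (gaussianPDFReal μ v) atTop (𝓝 0) := by
  have h : Tendsto (fun x : ℝ => -(x - μ) ^ 2 / (2 * v)) atTop atBot :=
    (tendsto_neg_atTop_atBot.comp ((tendsto_pow_atTop two_ne_zero).comp
      (tendsto_atTop_add_const_right _ (-μ) tendsto_id))).atBot_div_const (by positivity)
  simpa [gaussianPDFReal_def] using (tendsto_exp_atBot.comp h).const_mul (√(2 * π * v))⁻¹

lemma integrable_gaussianPDFReal_mul_id :
    Integrable (fun x => gaussianPDFReal 0 v x * x) := by
  rcases eq_or_ne v 0 with rfl | hv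
  · simp [gaussianPDFReal_zero_var]
  refine ((integrable_mul_exp_neg_mul_sq (b := (2 * (v : ℝ))⁻¹) (by positivity)).const_mul
    (√(2 * π * v))⁻¹).congr (ae_of_all _ fun x => ?_)
  simp only [gaussianPDFReal_def, sub_zero]
  ring_nf

lemma gaussianPDFReal_zero_neg (x : ℝ) : gaussianPDFReal 0 v (-x) = gaussianPDFReal 0 v x := by
  simp [gaussianPDFReal_def]

lemma setIntegral_gaussianReal_eq_setIntegral_smul {E : Type*} [NormedAddCommGroup E]
    [NormedSpace ℝ E] {μ : ℝ} {f : ℝ → E} (hv : v ≠ 0) (s : Set ℝ) :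
    ∫ x in s, f x ∂(gaussianReal μ v) = ∫ x in s, gaussianPDFReal μ v x • f x := by
  simp [gaussianReal, hv, setIntegral_withDensity_eq_setIntegral_toReal_smul' s
    (measurable_gaussianPDF _ _) (ae_of_all _ fun _ ↦ gaussianPDF_lt_top)]

lemma setIntegral_Ioi_id_gaussianReal (hv : v ≠ 0) (t : ℝ) :
    ∫ x in Ioi t, x ∂(gaussianReal 0 v) = v * gaussianPDFReal 0 v t := by
  have hderiv (x : ℝ) : HasDerivAt (fun y => -v * gaussianPDFReal 0 v y)
      (gaussianPDFReal 0 v x * x) x :=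
    (hasDerivAt_gaussianPDFReal 0 x).const_mul _ |>.congr_deriv (by field_simp; ring)
  simp_rw [setIntegral_gaussianReal_eq_setIntegral_smul hv, smul_eq_mul]
  rw [integral_Ioi_of_hasDerivAt_of_tendsto'
    (fun x _ => hderiv x) integrable_gaussianPDFReal_mul_id.integrableOn
    (by simpa using (tendsto_gaussianPDFReal_atTop 0 hv).const_mul (-(v : ℝ)))]
  ring

lemma integral_gaussianPDFReal_mul_gaussianPDFReal {a b : ℝ≥0} (ha : a ≠ 0) (hb : b ≠ 0) :
    ∫ x, gaussianPDFReal 0 a x * gaussianPDFReal 0 b x = gaussianPDFReal 0 (a + b) 0 := by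
  have hprod (x : ℝ) : gaussianPDFReal 0 a x * gaussianPDFReal 0 b x
      = (√(2 * π * a))⁻¹ * (√(2 * π * b))⁻¹
        * rexp (-((2 * (a : ℝ))⁻¹ + (2 * (b : ℝ))⁻¹) * x ^ 2) := by
    simp only [gaussianPDFReal_def, sub_zero]
    rw [mul_mul_mul_comm, ← exp_add]
    ring_nf
  simp_rw [hprod, integral_const_mul, integral_gaussian, gaussianPDFReal_def, sub_zero,
    zero_pow two_ne_zero, neg_zero, zero_div, exp_zero, mul_one, NNReal.coe_add]
  rw [← sqrt_inv, ← sqrt_inv, ← sqrt_inv, ← sqrt_mul (by positivity), ← sqrt_mul (by positivity)]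
  congr 1
  field_simp
  ring

lemma gaussianReal_real_Ioi_zero (hv : v ≠ 0) : (gaussianReal 0 v).real (Ioi 0) = 1 / 2 := by
  have := nullSingletonClass_gaussianReal (μ := 0) hv
  have hsymm : (gaussianReal 0 v).real (Iio 0) = (gaussianReal 0 v).real (Ioi 0) := by
    conv_lhs => rw [← neg_zero, ← gaussianReal_map_neg]
    rw [map_measureReal_apply measurable_neg measurableSet_Iio, neg_zero]
    congr 1 with x
    simp
  have htotal := measureReal_add_measureReal_compl (μ := gaussianReal 0 v)
    (measurableSet_Iic (a := 0))
  rw [compl_Iic, measureReal_congr Iio_ae_eq_Iic.symm, hsymm, probReal_univ] at htotal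
  linarith

section HasLaw

variable {Ω : Type*} [MeasurableSpace Ω] {P : Measure Ω} {X W : Ω → ℝ}

lemma HasLaw.measureReal_pos_of_gaussianReal (hX : HasLaw X (gaussianReal 0 v) P) (hv : v ≠ 0) :
    P.real {ω | 0 < X ω} = 1 / 2 := by
  rw [hX.measureReal_eq (p := (0 < ·)) measurableSet_Ioi]
  exact gaussianReal_real_Ioi_zero hv

lemma HasLaw.measureReal_neg_of_gaussianReal (hX : HasLaw X (gaussianReal 0 v) P) (hv : v ≠ 0) :
    P.real {ω | X ω < 0} = 1 / 2 := by
  have h : HasLaw (-X) (gaussianReal 0 v) P := by simpa using gaussianReal_neg hX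
  simpa using h.measureReal_pos_of_gaussianReal hv

lemma HasLaw.measure_eq_zero_of_gaussianReal (hX : HasLaw X (gaussianReal 0 v) P) (hv : v ≠ 0) :
    P {ω | X ω = 0} = 0 := by
  have := nullSingletonClass_gaussianReal (μ := 0) hv
  rw [hX.measure_eq (p := (· = 0)) (measurableSet_singleton 0)]
  exact measure_singleton 0

lemma IndepFun.hasLaw_add_gaussianReal {m₁ m₂ : ℝ} {v₁ v₂ : ℝ≥0}
    (hX : HasLaw X (gaussianReal m₁ v₁) P) (hW : HasLaw W (gaussianReal m₂ v₂) P)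
    (hXW : X ⟂ᵢ[P] W) : HasLaw (fun ω => X ω + W ω) (gaussianReal (m₁ + m₂) (v₁ + v₂)) P := by
  simpa [gaussianReal_conv_gaussianReal] using hXW.hasLaw_fun_add hX hW

lemma setIntegral_add_pos_of_hasLaw_gaussianReal {a b : ℝ≥0} (ha : a ≠ 0) (hb : b ≠ 0)
    (hX : HasLaw X (gaussianReal 0 a) P) (hW : HasLaw W (gaussianReal 0 b) P) (hXW : X ⟂ᵢ[P] W) :
    ∫ ω in {ω | 0 < X ω + W ω}, X ω ∂P = a * gaussianPDFReal 0 (a + b) 0 := by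
  have := hX.isProbabilityMeasure
  have hpair := (indepFun_iff_hasLaw_prodMk_prod hX hW).mp hXW
  have hs : MeasurableSet {p : ℝ × ℝ | 0 < p.1 + p.2} :=
    measurableSet_lt measurable_const (by fun_prop)
  have hint : Integrable (fun p : ℝ × ℝ => p.1) ((gaussianReal 0 a).prod (gaussianReal 0 b)) :=
    ((memLp_id_gaussianReal 1).integrable le_rfl).comp_fst _
  calc ∫ ω in {ω | 0 < X ω + W ω}, X ω ∂P
      = ∫ p in {p : ℝ × ℝ | 0 < p.1 + p.2}, p.1 ∂((gaussianReal 0 a).prod (gaussianReal 0 b)) := by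
        rw [← hpair.map_eq, setIntegral_map hs (by fun_prop) hpair.aemeasurable]
        rfl
    _ = ∫ y, ∫ x in Ioi (-y), x ∂(gaussianReal 0 a) ∂(gaussianReal 0 b) := by
        rw [← integral_indicator hs, integral_prod_symm _ (hint.indicator hs)]
        congr 1 with y
        rw [← integral_indicator measurableSet_Ioi]
        congr 1 with x
        simp [indicator_apply, neg_lt_iff_pos_add]
    _ = ∫ y, a * gaussianPDFReal 0 a y ∂(gaussianReal 0 b) := by
        simp_rw [setIntegral_Ioi_id_gaussianReal ha, gaussianPDFReal_zero_neg]
    _ = a * gaussianPDFReal 0 (a + b) 0 := by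
        simp_rw [integral_gaussianReal_eq_integral_smul hb, smul_eq_mul, mul_left_comm _ (a : ℝ),
          integral_const_mul, integral_gaussianPDFReal_mul_gaussianPDFReal hb ha, add_comm]

lemma setIntegral_add_neg_of_hasLaw_gaussianReal {a b : ℝ≥0} (ha : a ≠ 0) (hb : b ≠ 0)
    (hX : HasLaw X (gaussianReal 0 a) P) (hW : HasLaw W (gaussianReal 0 b) P) (hXW : X ⟂ᵢ[P] W) :
    ∫ ω in {ω | X ω + W ω < 0}, X ω ∂P = -(a * gaussianPDFReal 0 (a + b) 0) := by
  have h := setIntegral_add_pos_of_hasLaw_gaussianReal ha hb (X := -X) (W := -W)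
    (by simpa using gaussianReal_neg hX) (by simpa using gaussianReal_neg hW)
    (hXW.comp measurable_neg measurable_neg)
  simp only [Pi.neg_apply, integral_neg, ← neg_add, neg_pos] at h
  rw [← h, neg_neg]

end HasLaw

end ProbabilityTheory

/-- The conditional mean estimator of `X ~ N(0, σ²/2)` given the σ-algebra
generated by the one-bit observation `sign(X + W)`, `W ~ N(0, η²/2)` independent of `X`, is
linear: `E[X | sign(X+W)] = c · sign(X+W)` a.s. with `c = σ²/(√π √(σ²+η²))`. -/
theorem stmt10 {Ω : Type*} [MeasureSpace Ω] [IsProbabilityMeasure (ℙ : Measure Ω)]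
    (σ η : ℝ) (hσ : 0 < σ) (hη : 0 < η)
    (X W : Ω → ℝ) (hX : Measurable X) (hW : Measurable W)
    (hXd : Measure.map X ℙ = gaussianReal 0 ⟨σ ^ 2 / 2, by positivity⟩)
    (hWd : Measure.map W ℙ = gaussianReal 0 ⟨η ^ 2 / 2, by positivity⟩)
    (hindep : IndepFun X W)
    (c : ℝ) (hc : c = σ ^ 2 / (Real.sqrt π * Real.sqrt (σ ^ 2 + η ^ 2))) :
    ℙ[X | MeasurableSpace.comap (fun ω => Real.sign (X ω + W ω)) inferInstance] =ᵐ[ℙ]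
      fun ω => c * Real.sign (X ω + W ω) := by
  set a : ℝ≥0 := ⟨σ ^ 2 / 2, by positivity⟩
  set b : ℝ≥0 := ⟨η ^ 2 / 2, by positivity⟩
  have ha : a ≠ 0 := (NNReal.coe_pos (r := a)).mp (show (0 : ℝ) < σ ^ 2 / 2 by positivity) |>.ne'
  have hb : b ≠ 0 := (NNReal.coe_pos (r := b)).mp (show (0 : ℝ) < η ^ 2 / 2 by positivity) |>.ne'
  have hab : a + b ≠ 0 := add_ne_zero.mpr (.inl ha)
  have hXlaw : HasLaw X (gaussianReal 0 a) := ⟨hX.aemeasurable, hXd⟩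
  have hWlaw : HasLaw W (gaussianReal 0 b) := ⟨hW.aemeasurable, hWd⟩
  have hS : HasLaw (fun ω => X ω + W ω) (gaussianReal 0 (a + b)) := by
    simpa using hindep.hasLaw_add_gaussianReal hXlaw hWlaw
  have hmass : a * gaussianPDFReal 0 (a + b) 0 = c * (1 / 2) := by
    change σ ^ 2 / 2 * ((√(2 * π * (σ ^ 2 / 2 + η ^ 2 / 2)))⁻¹
      * rexp (-(0 - 0) ^ 2 / (2 * (σ ^ 2 / 2 + η ^ 2 / 2)))) = c * (1 / 2)
    rw [show 2 * π * (σ ^ 2 / 2 + η ^ 2 / 2) = π * (σ ^ 2 + η ^ 2) by ring,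
      sqrt_mul pi_pos.le, hc, sub_self, zero_pow two_ne_zero, neg_zero, zero_div, exp_zero, mul_one]
    field_simp
  refine condExp_comap_sign_ae_eq (by fun_prop)
    ((hXd ▸ (memLp_id_gaussianReal 1).integrable le_rfl).comp_measurable hX) c ?_ ?_ ?_
  · rw [setIntegral_add_pos_of_hasLaw_gaussianReal ha hb hXlaw hWlaw hindep,
      hS.measureReal_pos_of_gaussianReal hab, hmass]
  · rw [setIntegral_add_neg_of_hasLaw_gaussianReal ha hb hXlaw hWlaw hindep,
      hS.measureReal_neg_of_gaussianReal hab, hmass]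
  · exact setIntegral_measure_zero _ (hS.measure_eq_zero_of_gaussianReal hab)
end
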